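/- arXiv:2112.06882 — 2 statements merged into one kernel-verified Lean document; each statement's English description precedes it below -/
import Mathlib

section
/- For the d-dimensional irreducible representation ρ of 𝔰𝔩₂(ℂ) (d ≥ 2), the matrix (d²−1)·Tr(ρ(X)ρ(Y)ρ(Z))·I_d equals c_d · St₃(ρ(X),ρ(Y),ρ(Z)) for all X, Y, Z ∈ 𝔰𝔩₂(ℂ), where St₃(A,B,C) = ABC + BCA + CAB − BAC − ACB − CBA is the standard polynomial of degree 3 and c_d = Σ_{i=1}^{⌊(d+1)/2⌋} (d+1−2i)². -/
/-- The `d`-dimensional irreducible representation of `𝔰𝔩₂(ℂ)`, written in the monomial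
basis of binary forms of degree `d−1` (0-indexed matrix units). -/
noncomputable def sl2Rep (d : ℕ) (M : Matrix (Fin 2) (Fin 2) ℂ) :
    Matrix (Fin d) (Fin d) ℂ :=
  Matrix.of fun i j =>
    M 0 1 * (if (j : ℕ) = (i : ℕ) + 1 then ((i : ℕ) + 1 : ℂ) else 0) +
    M 1 0 * (if (i : ℕ) = (j : ℕ) + 1 then ((d : ℂ) - 1 - (j : ℕ)) else 0) +
    M 0 0 * (if i = j then ((d : ℂ) - 1 - 2 * (i : ℕ)) else 0)

/-- The standard polynomial of degree 3. -/
noncomputable def St3 {n : ℕ} (A B C : Matrix (Fin n) (Fin n) ℂ) : Matrix (Fin n) (Fin n) ℂ :=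
  A * B * C + B * C * A + C * A * B - B * A * C - A * C * B - C * B * A

/-!
Write `e, f, h` for the standard basis of `𝔰𝔩₂` and `ρ = sl2Rep d`. In the coordinates of
`X, Y, Z` with respect to `e, f, h` the polynomial `St₃(ρX, ρY, ρZ)` is trilinear and alternating,
so it equals `det · St₃(ρe, ρf, ρh)`; and `St₃(ρe, ρf, ρh) = 2(ρe ρf + ρf ρe) + (ρh)²` is the
Casimir element, which acts as `d² − 1`. Since `Tr St₃(A, B, C) = 3 (Tr ABC − Tr BAC)`, the trace
`Tr(ρX ρY ρZ)` is `Tr St₃ / 6` once `Tr ABC + Tr BAC` vanishes on the image of `ρ`. Expanding in the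
basis, `ρe`, `ρf`, `ρh` live on the diagonals `1, −1, 0`, so only products of total shift `0`
contribute; through the Casimir these reduce to `Tr ρh` and `Tr (ρh)³`, which vanish because the
weights `d − 1 − 2i` are symmetric about `0`. Finally `c_d = d(d² − 1)/6`.
-/

open Matrix Finset

section St3

variable {n : ℕ}

theorem St3_sum_smul (u : Fin 3 → Matrix (Fin n) (Fin n) ℂ) (a b c : Fin 3 → ℂ) :
    St3 (∑ i, a i • u i) (∑ i, b i • u i) (∑ i, c i • u i) =
      (Matrix.of ![a, b, c]).det • St3 (u 0) (u 1) (u 2) := by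
  simp only [St3, Fin.sum_univ_three, det_fin_three, of_apply, cons_val_zero, cons_val_one,
    cons_val_two, head_cons, tail_cons, add_mul, mul_add, smul_mul_assoc, mul_smul_comm]
  module

theorem St3_eq_mul_commutator (A B C : Matrix (Fin n) (Fin n) ℂ) :
    St3 A B C = A * (B * C - C * B) + B * (C * A - A * C) + C * (A * B - B * A) := by
  simp only [St3, mul_sub, ← mul_assoc]
  abel

theorem trace_St3 (A B C : Matrix (Fin n) (Fin n) ℂ) :
    (St3 A B C).trace = 3 * ((A * B * C).trace - (B * A * C).trace) := by
  have h₁ : (B * C * A).trace = (A * B * C).trace := trace_mul_cycle B C A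
  have h₂ : (C * A * B).trace = (A * B * C).trace := (trace_mul_cycle A B C).symm
  have h₃ : (A * C * B).trace = (B * A * C).trace := trace_mul_cycle A C B
  have h₄ : (C * B * A).trace = (B * A * C).trace := (trace_mul_cycle B A C).symm
  simp only [St3, trace_add, trace_sub, h₁, h₂, h₃, h₄]
  ring

end St3

section Trace

variable {ι m R : Type*} [Fintype ι] [Fintype m]

theorem trace_sum_smul_mul_sum_smul_mul_sum_smul [CommSemiring R] (u : ι → Matrix m m R)
    (a b c : ι → R) :
    ((∑ i, a i • u i) * (∑ j, b j • u j) * (∑ k, c k • u k)).trace =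
      ∑ i, ∑ j, ∑ k, a i * b j * c k * (u i * u j * u k).trace := by
  rw [sum_mul_sum, sum_mul]
  simp only [sum_mul]
  simp only [mul_sum, trace_sum, smul_mul_smul_comm, trace_smul, smul_eq_mul]

theorem trace_mul_mul_add_trace_swap_eq_zero [CommRing R] (u : ι → Matrix m m R)
    (hu : ∀ i j k, (u i * u j * u k).trace + (u j * u i * u k).trace = 0) (a b c : ι → R) :
    ((∑ i, a i • u i) * (∑ j, b j • u j) * (∑ k, c k • u k)).trace +
      ((∑ j, b j • u j) * (∑ i, a i • u i) * (∑ k, c k • u k)).trace = 0 := by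
  rw [trace_sum_smul_mul_sum_smul_mul_sum_smul, trace_sum_smul_mul_sum_smul_mul_sum_smul,
    Finset.sum_comm (f := fun j i => ∑ k, b j * a i * c k * (u j * u i * u k).trace)]
  simp only [← Finset.sum_add_distrib]
  refine sum_eq_zero fun i _ => sum_eq_zero fun j _ => sum_eq_zero fun k _ => ?_
  linear_combination (a i * b j * c k) * hu i j k

end Trace

theorem sum_range_sub_two_mul_sq (d : ℕ) :
    ∑ i ∈ range ((d + 1) / 2), ((d : ℂ) - 1 - 2 * (i : ℂ)) ^ 2 = d * ((d : ℂ) ^ 2 - 1) / 6 := by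
  induction d using Nat.twoStepInduction with
  | zero => simp
  | one => simp
  | more d ih _ =>
    have shift (k : ℕ) : ((d + 2 : ℕ) : ℂ) - 1 - 2 * ((k + 1 : ℕ) : ℂ) = d - 1 - 2 * k := by
      push_cast; ring
    rw [show (d + 2 + 1) / 2 = (d + 1) / 2 + 1 by omega, sum_range_succ']
    simp only [shift, ih]
    push_cast
    ring

namespace Matrix

variable {n : ℕ} {R : Type*} [NonUnitalNonAssocSemiring R]

def SupportedOnDiag (M : Matrix (Fin n) (Fin n) R) (s : ℤ) : Prop :=
  ∀ i j : Fin n, (j : ℤ) ≠ i + s → M i j = 0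

theorem SupportedOnDiag.mul {M N : Matrix (Fin n) (Fin n) R} {s t : ℤ}
    (hM : M.SupportedOnDiag s) (hN : N.SupportedOnDiag t) : (M * N).SupportedOnDiag (s + t) := by
  intro i j hij
  rw [mul_apply]
  refine Finset.sum_eq_zero fun k _ => ?_
  by_cases hk : (k : ℤ) = i + s
  · rw [hN k j (by omega), mul_zero]
  · rw [hM i k hk, zero_mul]

theorem SupportedOnDiag.trace_eq_zero {M : Matrix (Fin n) (Fin n) R} {s : ℤ}
    (hM : M.SupportedOnDiag s) (hs : s ≠ 0) : M.trace = 0 :=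
  Finset.sum_eq_zero fun i _ => hM i i (by omega)

end Matrix

section Sl2

variable (d : ℕ)

noncomputable def sl2E : Matrix (Fin d) (Fin d) ℂ := sl2Rep d !![0, 1; 0, 0]
noncomputable def sl2F : Matrix (Fin d) (Fin d) ℂ := sl2Rep d !![0, 0; 1, 0]
noncomputable def sl2H : Matrix (Fin d) (Fin d) ℂ := sl2Rep d !![1, 0; 0, -1]

noncomputable def sl2Basis : Fin 3 → Matrix (Fin d) (Fin d) ℂ := ![sl2E d, sl2F d, sl2H d]

def sl2Coord (M : Matrix (Fin 2) (Fin 2) ℂ) : Fin 3 → ℂ := ![M 0 1, M 1 0, M 0 0]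

theorem sl2Rep_eq_sum (M : Matrix (Fin 2) (Fin 2) ℂ) :
    sl2Rep d M = ∑ k, sl2Coord M k • sl2Basis d k := by
  ext i j
  simp [sl2Rep, sl2Basis, sl2Coord, sl2E, sl2F, sl2H, Fin.sum_univ_three]

def sl2Weight (i : Fin d) : ℂ := d - 1 - 2 * (i : ℕ)

variable {d}

theorem sl2E_apply (i j : Fin d) :
    sl2E d i j = if (j : ℕ) = i + 1 then ((i : ℕ) + 1 : ℂ) else 0 := by
  simp [sl2E, sl2Rep]

theorem sl2F_apply (i j : Fin d) :
    sl2F d i j = if (i : ℕ) = j + 1 then (d : ℂ) - 1 - (j : ℕ) else 0 := by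
  simp [sl2F, sl2Rep]

theorem sl2H_eq_diagonal : sl2H d = diagonal (sl2Weight d) := by
  ext i j
  simp [sl2H, sl2Rep, sl2Weight, diagonal_apply]

theorem sl2E_mul_sl2F :
    sl2E d * sl2F d = diagonal fun i : Fin d => ((i : ℕ) + 1) * ((d : ℂ) - 1 - (i : ℕ)) := by
  ext i j
  rw [mul_apply, diagonal_apply]
  by_cases hi : (i : ℕ) + 1 < d
  · rw [Finset.sum_eq_single ⟨i + 1, hi⟩ (fun k _ hk => by
      rw [sl2E_apply, if_neg (fun h => hk (Fin.ext h)), zero_mul]) (by simp)]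
    simp only [sl2E_apply, sl2F_apply, if_true, Fin.ext_iff, add_left_inj]
    split_ifs with h <;> simp [h]
  · have hlast : ((i : ℕ) : ℂ) = d - 1 := by
      rw [show (i : ℕ) = d - 1 by omega, Nat.cast_sub (by omega), Nat.cast_one]
    rw [Finset.sum_eq_zero fun k _ => by rw [sl2E_apply, if_neg (by omega), zero_mul]]
    simp [hlast]

theorem sl2F_mul_sl2E :
    sl2F d * sl2E d = diagonal fun i : Fin d => (i : ℕ) * ((d : ℂ) - (i : ℕ)) := by
  ext ⟨i, hi⟩ j
  rw [mul_apply, diagonal_apply]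
  cases i with
  | zero => simp [sl2F_apply]
  | succ m =>
    rw [Finset.sum_eq_single ⟨m, by omega⟩ (fun k _ hk => by
      rw [sl2F_apply, if_neg (fun h => hk (Fin.ext (by simp at h ⊢; omega))), zero_mul]) (by simp)]
    simp only [sl2E_apply, sl2F_apply, if_true, Fin.ext_iff]
    split_ifs with h <;> first | omega | (push_cast; ring)

theorem sl2E_mul_sl2F_sub : sl2E d * sl2F d - sl2F d * sl2E d = sl2H d := by
  rw [sl2E_mul_sl2F, sl2F_mul_sl2E, sl2H_eq_diagonal, diagonal_sub]
  congr 1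
  funext i
  simp only [sl2Weight]
  ring

theorem sl2H_mul_sl2E_sub : sl2H d * sl2E d - sl2E d * sl2H d = 2 • sl2E d := by
  ext i j
  simp only [sl2H_eq_diagonal, Matrix.sub_apply, diagonal_mul, mul_diagonal, sl2E_apply,
    Matrix.smul_apply, sl2Weight]
  split_ifs with h
  · rw [h]; push_cast; ring
  · simp

theorem sl2F_mul_sl2H_sub : sl2F d * sl2H d - sl2H d * sl2F d = 2 • sl2F d := by
  ext i j
  simp only [sl2H_eq_diagonal, Matrix.sub_apply, diagonal_mul, mul_diagonal, sl2F_apply,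
    Matrix.smul_apply, sl2Weight]
  split_ifs with h
  · rw [h]; push_cast; ring
  · simp

theorem sl2_casimir :
    2 • (sl2E d * sl2F d + sl2F d * sl2E d) + sl2H d * sl2H d = ((d : ℂ) ^ 2 - 1) • 1 := by
  ext i j
  simp only [sl2E_mul_sl2F, sl2F_mul_sl2E, sl2H_eq_diagonal, diagonal_mul_diagonal,
    Matrix.add_apply, Matrix.smul_apply, diagonal_apply, one_apply, sl2Weight]
  split_ifs
  · simp only [smul_eq_mul, mul_one]
    ring
  · simp

theorem St3_sl2E_sl2F_sl2H : St3 (sl2E d) (sl2F d) (sl2H d) = ((d : ℂ) ^ 2 - 1) • 1 := by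
  rw [St3_eq_mul_commutator, sl2F_mul_sl2H_sub, sl2H_mul_sl2E_sub, sl2E_mul_sl2F_sub,
    ← sl2_casimir]
  simp only [mul_smul_comm, smul_add]

theorem sl2Weight_rev (i : Fin d) : sl2Weight d i.rev = -sl2Weight d i := by
  simp only [sl2Weight, Fin.val_rev]
  rw [Nat.cast_sub (by omega)]
  push_cast
  ring

theorem sum_sl2Weight_pow_of_odd {k : ℕ} (hk : Odd k) : ∑ i, sl2Weight d i ^ k = 0 := by
  have h := Equiv.sum_comp Fin.revPerm (fun i => sl2Weight d i ^ k)
  simp only [Fin.revPerm_apply, sl2Weight_rev, hk.neg_pow, sum_neg_distrib] at h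
  exact self_eq_neg.mp h.symm

theorem trace_sl2H : (sl2H d).trace = 0 := by
  simpa [sl2H_eq_diagonal] using sum_sl2Weight_pow_of_odd (d := d) odd_one

theorem trace_sl2H_mul_sl2H_mul_sl2H : (sl2H d * sl2H d * sl2H d).trace = 0 := by
  simpa [sl2H_eq_diagonal, pow_succ] using sum_sl2Weight_pow_of_odd (d := d) (k := 3) (by decide)

theorem trace_sl2E_mul_sl2F_mul_sl2H_add :
    (sl2E d * sl2F d * sl2H d).trace + (sl2F d * sl2E d * sl2H d).trace = 0 := by
  have h := congrArg (fun M => (M * sl2H d).trace) sl2_casimir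
  simp only [add_mul, smul_mul_assoc, one_mul, trace_add, trace_smul, trace_sl2H,
    trace_sl2H_mul_sl2H_mul_sl2H, smul_eq_mul, mul_zero, add_zero] at h
  linear_combination h / 2

def sl2Shift : Fin 3 → ℤ := ![1, -1, 0]

theorem supportedOnDiag_sl2E : (sl2E d).SupportedOnDiag 1 := by
  intro i j hij
  rw [sl2E_apply, if_neg (by omega)]

theorem supportedOnDiag_sl2F : (sl2F d).SupportedOnDiag (-1) := by
  intro i j hij
  rw [sl2F_apply, if_neg (by omega)]

theorem supportedOnDiag_sl2H : (sl2H d).SupportedOnDiag 0 := by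
  intro i j hij
  rw [sl2H_eq_diagonal, diagonal_apply_ne _ (by omega)]

theorem supportedOnDiag_sl2Basis (k : Fin 3) : (sl2Basis d k).SupportedOnDiag (sl2Shift k) := by
  fin_cases k
  exacts [supportedOnDiag_sl2E, supportedOnDiag_sl2F, supportedOnDiag_sl2H]

theorem trace_sl2Basis_mul_mul_eq_zero {i j k : Fin 3}
    (h : sl2Shift i + sl2Shift j + sl2Shift k ≠ 0) :
    (sl2Basis d i * sl2Basis d j * sl2Basis d k).trace = 0 :=
  (((supportedOnDiag_sl2Basis i).mul (supportedOnDiag_sl2Basis j)).mul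
    (supportedOnDiag_sl2Basis k)).trace_eq_zero h

theorem trace_sl2Basis_mul_mul_add_swap (i j k : Fin 3) :
    (sl2Basis d i * sl2Basis d j * sl2Basis d k).trace +
      (sl2Basis d j * sl2Basis d i * sl2Basis d k).trace = 0 := by
  by_cases h : sl2Shift i + sl2Shift j + sl2Shift k = 0
  · have hEFH := trace_sl2E_mul_sl2F_mul_sl2H_add (d := d)
    have hHHH := trace_sl2H_mul_sl2H_mul_sl2H (d := d)
    have hFHE := trace_mul_cycle (sl2F d) (sl2H d) (sl2E d)
    have hHEF := (trace_mul_cycle (sl2E d) (sl2F d) (sl2H d)).symm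
    have hEHF := trace_mul_cycle (sl2E d) (sl2H d) (sl2F d)
    have hHFE := (trace_mul_cycle (sl2F d) (sl2E d) (sl2H d)).symm
    -- the triples of total shift `0` are `(h, h, h)` and the permutations of `(e, f, h)`
    fin_cases i <;> fin_cases j <;> fin_cases k <;> first | exact absurd h (by decide) | skip
    all_goals
      simp only [sl2Basis, Fin.reduceFinMk, Matrix.cons_val, hFHE, hHEF, hEHF, hHFE]
      first | linear_combination hEFH | linear_combination 2 * hHHH
  · rw [trace_sl2Basis_mul_mul_eq_zero h, trace_sl2Basis_mul_mul_eq_zero (by omega), add_zero]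

theorem trace_sl2Rep_mul_mul_add_swap (X Y Z : Matrix (Fin 2) (Fin 2) ℂ) :
    (sl2Rep d X * sl2Rep d Y * sl2Rep d Z).trace +
      (sl2Rep d Y * sl2Rep d X * sl2Rep d Z).trace = 0 := by
  simp only [sl2Rep_eq_sum d]
  exact trace_mul_mul_add_trace_swap_eq_zero _ trace_sl2Basis_mul_mul_add_swap _ _ _

theorem trace_sl2Rep_mul_mul (X Y Z : Matrix (Fin 2) (Fin 2) ℂ) :
    (sl2Rep d X * sl2Rep d Y * sl2Rep d Z).trace =
      (St3 (sl2Rep d X) (sl2Rep d Y) (sl2Rep d Z)).trace / 6 := by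
  rw [trace_St3]
  linear_combination (1 / 2 : ℂ) * trace_sl2Rep_mul_mul_add_swap X Y Z

theorem St3_sl2Rep (X Y Z : Matrix (Fin 2) (Fin 2) ℂ) :
    St3 (sl2Rep d X) (sl2Rep d Y) (sl2Rep d Z) =
      ((Matrix.of ![sl2Coord X, sl2Coord Y, sl2Coord Z]).det * ((d : ℂ) ^ 2 - 1)) • 1 := by
  rw [sl2Rep_eq_sum d X, sl2Rep_eq_sum d Y, sl2Rep_eq_sum d Z, St3_sum_smul, ← smul_smul]
  exact congrArg _ St3_sl2E_sl2F_sl2H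

end Sl2

theorem stmt_11_general (d : ℕ) (X Y Z : Matrix (Fin 2) (Fin 2) ℂ) :
    (((d : ℂ) ^ 2 - 1) * Matrix.trace (sl2Rep d X * sl2Rep d Y * sl2Rep d Z)) •
        (1 : Matrix (Fin d) (Fin d) ℂ) =
      (∑ i ∈ Finset.range ((d + 1) / 2), ((d : ℂ) - 1 - 2 * (i : ℂ)) ^ 2) •
        St3 (sl2Rep d X) (sl2Rep d Y) (sl2Rep d Z) := by
  rw [trace_sl2Rep_mul_mul, St3_sl2Rep, trace_smul, trace_one, Fintype.card_fin,
    sum_range_sub_two_mul_sq, smul_smul, smul_eq_mul]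
  congr 1
  ring

/-- For the `d`-dimensional irreducible representation `ρ` of `𝔰𝔩₂(ℂ)` (`d ≥ 2`),
`(d²−1)·Tr(ρ(X)ρ(Y)ρ(Z))·I_d = c_d · St₃(ρ(X),ρ(Y),ρ(Z))` for all traceless
`X, Y, Z`, where `c_d = Σ_{i=1}^{⌊(d+1)/2⌋} (d+1−2i)²`. -/
theorem stmt_11 (d : ℕ) (hd : 2 ≤ d) (X Y Z : Matrix (Fin 2) (Fin 2) ℂ)
    (hX : X.trace = 0) (hY : Y.trace = 0) (hZ : Z.trace = 0) :
    (((d : ℂ) ^ 2 - 1) * Matrix.trace (sl2Rep d X * sl2Rep d Y * sl2Rep d Z)) •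
        (1 : Matrix (Fin d) (Fin d) ℂ) =
      (∑ i ∈ Finset.range ((d + 1) / 2), ((d : ℂ) - 1 - 2 * (i : ℂ)) ^ 2) •
        St3 (sl2Rep d X) (sl2Rep d Y) (sl2Rep d Z) :=
  stmt_11_general d X Y Z
end

section
/- For the d-dimensional irreducible representation ρ of 𝔰𝔩₂(ℂ), the standard polynomial St₃(ρ(X), ρ(Y), ρ(Z)) is a scalar matrix for all X, Y, Z ∈ 𝔰𝔩₂(ℂ), i.e. it lies in ℂ·I_d. -/
/-- Auxiliary: the raising operator `e` in the `d`-dimensional representation. -/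
noncomputable def Ed (d : ℕ) : Matrix (Fin d) (Fin d) ℂ :=
  Matrix.of fun i j => if (j : ℕ) = (i : ℕ) + 1 then ((i : ℕ) + 1 : ℂ) else 0

/-- Auxiliary: the lowering operator `f` in the `d`-dimensional representation. -/
noncomputable def Fd (d : ℕ) : Matrix (Fin d) (Fin d) ℂ :=
  Matrix.of fun i j => if (i : ℕ) = (j : ℕ) + 1 then ((d : ℂ) - 1 - (j : ℕ)) else 0

/-- Auxiliary: the Cartan element `h` in the `d`-dimensional representation. -/
noncomputable def Hd (d : ℕ) : Matrix (Fin d) (Fin d) ℂ :=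
  Matrix.of fun i j => if i = j then ((d : ℂ) - 1 - 2 * (i : ℕ)) else 0

lemma sum_ite_val {d m : ℕ} (g : Fin d → ℂ) :
    ∑ k : Fin d, (if (k : ℕ) = m then g k else 0) =
      if h : m < d then g ⟨m, h⟩ else 0 := by
  split
  · next h =>
    rw [Finset.sum_eq_single (⟨m, h⟩ : Fin d)]
    · simp
    · intro k _ hk
      rw [if_neg]
      intro hv
      exact hk (Fin.ext hv)
    · simp
  · next h =>
    apply Finset.sum_eq_zero
    intro k _
    rw [if_neg]
    intro hv
    exact h (hv ▸ k.isLt)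

lemma mulH {d : ℕ} (M : Matrix (Fin d) (Fin d) ℂ) (i j : Fin d) :
    (M * Hd d) i j = M i j * ((d : ℂ) - 1 - 2 * (j : ℕ)) := by
  rw [Matrix.mul_apply]
  simp [Hd, Finset.sum_ite_eq, mul_ite]

lemma Hmul {d : ℕ} (M : Matrix (Fin d) (Fin d) ℂ) (i j : Fin d) :
    (Hd d * M) i j = ((d : ℂ) - 1 - 2 * (i : ℕ)) * M i j := by
  rw [Matrix.mul_apply]
  simp [Hd, Finset.sum_ite_eq, ite_mul]

lemma EF_apply {d : ℕ} (i j : Fin d) :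
    (Ed d * Fd d) i j =
      if i = j then (((i : ℕ) : ℂ) + 1) * ((d : ℂ) - 1 - (i : ℕ)) else 0 := by
  rw [Matrix.mul_apply]
  simp only [Ed, Fd, Matrix.of_apply, ite_mul, zero_mul]
  rw [sum_ite_val
    (fun k => (((i : ℕ) : ℂ) + 1) * (if (k : ℕ) = (j : ℕ) + 1 then ((d : ℂ) - 1 - (j : ℕ)) else 0))]
  split
  · next h =>
    by_cases hij : i = j
    · subst hij; simp
    · rw [if_neg (fun hv => hij (Fin.ext (Nat.succ_injective hv))), if_neg hij, mul_zero]
  · next h =>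
    have hd : (i : ℕ) + 1 = d := by omega
    by_cases hij : i = j
    · subst hij
      rw [if_pos rfl]
      have : ((d : ℕ) : ℂ) = ((i : ℕ) : ℂ) + 1 := by exact_mod_cast hd.symm
      rw [this]; ring
    · rw [if_neg hij]

lemma FE_apply {d : ℕ} (i j : Fin d) :
    (Fd d * Ed d) i j =
      if i = j then ((i : ℕ) : ℂ) * ((d : ℂ) - (i : ℕ)) else 0 := by
  rw [Matrix.mul_apply]
  simp only [Ed, Fd, Matrix.of_apply, ite_mul, zero_mul]
  rcases Nat.eq_zero_or_eq_succ_pred (i : ℕ) with hi | hi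
  · rw [Finset.sum_eq_zero, eq_comm]
    · split
      · next hij => simp [hi]
      · rfl
    · intro k _
      rw [if_neg (by omega)]
  · have hrw : ∀ k : Fin d, ((i : ℕ) = (k : ℕ) + 1) = ((k : ℕ) = (i : ℕ) - 1) := by
      intro k; simp only [eq_iff_iff]; omega
    simp only [hrw]
    rw [sum_ite_val
      (fun k => ((d : ℂ) - 1 - (k : ℕ)) * (if (j : ℕ) = (k : ℕ) + 1 then ((k : ℕ) : ℂ) + 1 else 0))]
    rw [dif_pos (by omega : (i : ℕ) - 1 < d)]
    simp only [Fin.val_mk]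
    by_cases hij : i = j
    · subst hij
      rw [if_pos (by omega), if_pos rfl]
      have h1 : (((i : ℕ) - 1 : ℕ) : ℂ) = ((i : ℕ) : ℂ) - 1 := by
        have : 1 ≤ (i : ℕ) := by omega
        push_cast [this]; ring
      rw [h1]; ring
    · rw [if_neg (by
        intro hv
        exact hij (Fin.ext (by omega))), if_neg hij, mul_zero]

lemma EHF_apply {d : ℕ} (i j : Fin d) :
    (Ed d * Hd d * Fd d) i j =
      if i = j then (((i : ℕ) : ℂ) + 1) * ((d : ℂ) - 3 - 2 * (i : ℕ)) * ((d : ℂ) - 1 - (i : ℕ))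
      else 0 := by
  rw [Matrix.mul_apply]
  simp only [mulH, Ed, Fd, Matrix.of_apply, ite_mul, zero_mul]
  rw [sum_ite_val
    (fun k => (((i : ℕ) : ℂ) + 1) * ((d : ℂ) - 1 - 2 * (k : ℕ)) *
      (if (k : ℕ) = (j : ℕ) + 1 then ((d : ℂ) - 1 - (j : ℕ)) else 0))]
  split
  · next h =>
    by_cases hij : i = j
    · subst hij
      rw [if_pos rfl, if_pos rfl]
      push_cast
      ring
    · rw [if_neg (fun hv => hij (Fin.ext (Nat.succ_injective hv))), if_neg hij, mul_zero]
  · next h =>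
    have hd : (i : ℕ) + 1 = d := by omega
    by_cases hij : i = j
    · subst hij
      rw [if_pos rfl]
      have : ((d : ℕ) : ℂ) = ((i : ℕ) : ℂ) + 1 := by exact_mod_cast hd.symm
      rw [this]; ring
    · rw [if_neg hij]

lemma FHE_apply {d : ℕ} (i j : Fin d) :
    (Fd d * Hd d * Ed d) i j =
      if i = j then ((i : ℕ) : ℂ) * ((d : ℂ) + 1 - 2 * (i : ℕ)) * ((d : ℂ) - (i : ℕ))
      else 0 := by
  rw [Matrix.mul_apply]
  simp only [mulH, Ed, Fd, Matrix.of_apply, ite_mul, zero_mul]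
  rcases Nat.eq_zero_or_eq_succ_pred (i : ℕ) with hi | hi
  · rw [Finset.sum_eq_zero, eq_comm]
    · split
      · next hij => simp [hi]
      · rfl
    · intro k _
      rw [if_neg (by omega)]
  · have hrw : ∀ k : Fin d, ((i : ℕ) = (k : ℕ) + 1) = ((k : ℕ) = (i : ℕ) - 1) := by
      intro k; simp only [eq_iff_iff]; omega
    simp only [hrw]
    rw [sum_ite_val
      (fun k => ((d : ℂ) - 1 - (k : ℕ)) * ((d : ℂ) - 1 - 2 * (k : ℕ)) *
        (if (j : ℕ) = (k : ℕ) + 1 then ((k : ℕ) : ℂ) + 1 else 0))]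
    rw [dif_pos (by omega : (i : ℕ) - 1 < d)]
    simp only [Fin.val_mk]
    by_cases hij : i = j
    · subst hij
      rw [if_pos (by omega), if_pos rfl]
      have h1 : (((i : ℕ) - 1 : ℕ) : ℂ) = ((i : ℕ) : ℂ) - 1 := by
        have : 1 ≤ (i : ℕ) := by omega
        push_cast [this]; ring
      rw [h1]; ring
    · rw [if_neg (by
        intro hv
        exact hij (Fin.ext (by omega))), if_neg hij, mul_zero]

/-- Razmyslov's identity for the basis triple: `St₃(e, f, h) = (d² − 1)·1`. -/
lemma St3_EFH (d : ℕ) : St3 (Ed d) (Fd d) (Hd d) = ((d : ℂ) ^ 2 - 1) • 1 := by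
  ext i j
  have h1 : (Hd d * Ed d * Fd d) i j =
      ((d : ℂ) - 1 - 2 * (i : ℕ)) * (Ed d * Fd d) i j := by
    rw [mul_assoc]; exact Hmul _ i j
  have h2 : (Hd d * Fd d * Ed d) i j =
      ((d : ℂ) - 1 - 2 * (i : ℕ)) * (Fd d * Ed d) i j := by
    rw [mul_assoc]; exact Hmul _ i j
  simp only [St3, Matrix.sub_apply, Matrix.add_apply]
  rw [mulH (Ed d * Fd d), mulH (Fd d * Ed d), FHE_apply, EHF_apply, h1, h2,
    EF_apply, FE_apply]
  by_cases hij : i = j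
  · subst hij
    simp only [if_pos rfl, eq_self_iff_true, if_true, Matrix.smul_apply, Matrix.one_apply_eq,
      smul_eq_mul, mul_one]
    ring
  · simp [hij, Matrix.one_apply_ne hij]

/-- `St₃` is alternating trilinear, so on a span of three matrices it reduces to a
determinant multiple of `St₃` of the three matrices. -/
lemma St3_comb {n : ℕ} (A B C : Matrix (Fin n) (Fin n) ℂ)
    (a1 a2 a3 b1 b2 b3 c1 c2 c3 : ℂ) :
    St3 (a1 • A + a2 • B + a3 • C) (b1 • A + b2 • B + b3 • C) (c1 • A + c2 • B + c3 • C) =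
      (a1 * b2 * c3 - a1 * b3 * c2 - a2 * b1 * c3 + a2 * b3 * c1 + a3 * b1 * c2 - a3 * b2 * c1)
        • St3 A B C := by
  simp only [St3, add_mul, mul_add, smul_mul_assoc, mul_smul_comm, smul_smul, smul_add, smul_sub]
  module

lemma sl2Rep_decomp (d : ℕ) (M : Matrix (Fin 2) (Fin 2) ℂ) :
    sl2Rep d M = M 0 1 • Ed d + M 1 0 • Fd d + M 0 0 • Hd d := by
  ext i j
  simp [sl2Rep, Ed, Fd, Hd, Matrix.add_apply, Matrix.smul_apply, smul_eq_mul]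

/-- For the `d`-dimensional irreducible representation `ρ` of `𝔰𝔩₂(ℂ)`, the standard
polynomial `St₃(ρ(X), ρ(Y), ρ(Z))` is a scalar matrix for all traceless `X, Y, Z`. -/
theorem stmt_12 (d : ℕ) (X Y Z : Matrix (Fin 2) (Fin 2) ℂ)
    (hX : X.trace = 0) (hY : Y.trace = 0) (hZ : Z.trace = 0) :
    ∃ c : ℂ, St3 (sl2Rep d X) (sl2Rep d Y) (sl2Rep d Z) =
      c • (1 : Matrix (Fin d) (Fin d) ℂ) := by
  refine ⟨(X 0 1 * Y 1 0 * Z 0 0 - X 0 1 * Y 0 0 * Z 1 0 - X 1 0 * Y 0 1 * Z 0 0 +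
      X 1 0 * Y 0 0 * Z 0 1 + X 0 0 * Y 0 1 * Z 1 0 - X 0 0 * Y 1 0 * Z 0 1) *
      ((d : ℂ) ^ 2 - 1), ?_⟩
  rw [sl2Rep_decomp, sl2Rep_decomp, sl2Rep_decomp, St3_comb, St3_EFH, smul_smul]
end
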